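/- arXiv:1611.08117 — 3 statements merged into one kernel-verified Lean document; each statement's English description precedes it below -/
import Mathlib

section
/- Let $\mathcal{M}_1, \ldots, \mathcal{M}_r \subseteq \mathbb{R}^N$ be smooth embedded submanifolds that are cones. Then the condition number of the join decomposition problem is scale invariant: for every $(p_1, \ldots, p_r) \in \mathcal{M}_1 \times \cdots \times \mathcal{M}_r$ and all nonzero reals $\beta_1, \ldots, \beta_r$, one has $\kappa((p_1, \ldots, p_r)) = \kappa((\beta_1 p_1, \ldots, \beta_r p_r))$. -/
/-!
A nonzero scaling `x ↦ β • x` maps a cone onto itself, hence maps the tangent cone at `p` onto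
the tangent cone at `β • p`, so both points have the same tangent space. On the other hand, for
blocks `Uᵢ` with orthonormal columns, the values `‖∑ᵢ Uᵢ xᵢ‖` with `∑ᵢ ‖xᵢ‖² = 1` are exactly the
values `‖∑ᵢ wᵢ‖` with `wᵢ ∈ col Uᵢ` and `∑ᵢ ‖wᵢ‖² = 1`, so the smallest singular value of
`[U₁ ⋯ U_r]` depends only on the column spaces of the blocks.
-/

open scoped BigOperators

/-- The smallest singular value of the "matrix" whose columns are the vectors `u i`. -/
noncomputable def sminFam {E : Type*} [NormedAddCommGroup E] [InnerProductSpace ℝ E]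
    {ι : Type*} [Fintype ι] (u : ι → E) : ℝ :=
  sInf {c : ℝ | ∃ x : ι → ℝ, ∑ i, (x i) ^ 2 = 1 ∧ c = ‖∑ i, x i • u i‖}

/-- The tangent space at `p` to a subset `M ⊆ ℝ^N`, as the span of the tangent cone
(for an embedded smooth submanifold this is the usual tangent space). -/
noncomputable def tangentSpaceAt {N : ℕ} (M : Set (EuclideanSpace ℝ (Fin N)))
    (p : EuclideanSpace ℝ (Fin N)) : Submodule ℝ (EuclideanSpace ℝ (Fin N)) :=
  Submodule.span ℝ (tangentConeAt ℝ M p)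

section TangentCone

open scoped Pointwise

variable {𝕜 E : Type*} [NontriviallyNormedField 𝕜] [NormedAddCommGroup E] [NormedSpace 𝕜 E]
  {M : Set E} {p : E} {β : 𝕜}

theorem smul_mem_tangentConeAt_smul (hM : ∀ x ∈ M, β • x ∈ M) {y : E}
    (hy : y ∈ tangentConeAt 𝕜 M p) : β • y ∈ tangentConeAt 𝕜 M (β • p) := by
  have hmaps := (β • ContinuousLinearMap.id 𝕜 E).hasFDerivWithinAt.mapsTo_tangent_cone hy
  exact tangentConeAt_mono (by rintro _ ⟨x, hx, rfl⟩; exact hM x hx) hmaps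

theorem tangentConeAt_smul (hM : ∀ x ∈ M, ∀ α : 𝕜, α ≠ 0 → α • x ∈ M) (hβ : β ≠ 0) :
    tangentConeAt 𝕜 M (β • p) = β • tangentConeAt 𝕜 M p := by
  refine Set.Subset.antisymm (fun y hy => ⟨β⁻¹ • y, ?_, smul_inv_smul₀ hβ y⟩) ?_
  · simpa only [inv_smul_smul₀ hβ] using
      smul_mem_tangentConeAt_smul (fun x hx => hM x hx _ (inv_ne_zero hβ)) hy
  · rintro _ ⟨y, hy, rfl⟩
    exact smul_mem_tangentConeAt_smul (fun x hx => hM x hx β hβ) hy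

theorem span_tangentConeAt_smul (hM : ∀ x ∈ M, ∀ α : 𝕜, α ≠ 0 → α • x ∈ M)
    (hβ : β ≠ 0) :
    Submodule.span 𝕜 (tangentConeAt 𝕜 M (β • p)) = Submodule.span 𝕜 (tangentConeAt 𝕜 M p) := by
  rw [tangentConeAt_smul hM hβ, Submodule.span_smul_eq_of_isUnit _ _ hβ.isUnit]

end TangentCone

section Orthonormal

variable {E : Type*} [NormedAddCommGroup E] [InnerProductSpace ℝ E]

theorem Orthonormal.norm_sum_smul_sq {κ : Type*} [Fintype κ] {u : κ → E}
    (hu : Orthonormal ℝ u) (x : κ → ℝ) : ‖∑ k, x k • u k‖ ^ 2 = ∑ k, x k ^ 2 := by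
  rw [← real_inner_self_eq_norm_sq, hu.inner_sum]
  simp [sq]

variable {ι : Type*} [Fintype ι] {κ : ι → Type*} [∀ i, Fintype (κ i)]

theorem setOf_norm_sum_sigma_eq {u : ∀ i, κ i → E} (hu : ∀ i, Orthonormal ℝ (u i)) :
    {c : ℝ | ∃ x : (Σ i, κ i) → ℝ, ∑ q, x q ^ 2 = 1 ∧ c = ‖∑ q, x q • u q.1 q.2‖} =
      {c : ℝ | ∃ w : ι → E, (∀ i, w i ∈ Submodule.span ℝ (Set.range (u i))) ∧
        ∑ i, ‖w i‖ ^ 2 = 1 ∧ c = ‖∑ i, w i‖} := by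
  ext c
  constructor
  · rintro ⟨x, hx, rfl⟩
    refine ⟨fun i => ∑ k, x ⟨i, k⟩ • u i k, fun i => ?_, ?_, by rw [Fintype.sum_sigma]⟩
    · exact (Submodule.mem_span_range_iff_exists_fun ℝ).2 ⟨_, rfl⟩
    · simpa only [(hu _).norm_sum_smul_sq, Fintype.sum_sigma] using hx
  · rintro ⟨w, hw, hw1, rfl⟩
    choose x hx using fun i => (Submodule.mem_span_range_iff_exists_fun ℝ).1 (hw i)
    refine ⟨fun q => x q.1 q.2, ?_, ?_⟩
    · simpa only [Fintype.sum_sigma, ← (hu _).norm_sum_smul_sq, hx] using hw1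
    · simp only [Fintype.sum_sigma, hx]

theorem sminFam_sigma_eq_of_span_eq {u v : ∀ i, κ i → E} (hu : ∀ i, Orthonormal ℝ (u i))
    (hv : ∀ i, Orthonormal ℝ (v i))
    (hspan : ∀ i, Submodule.span ℝ (Set.range (u i)) = Submodule.span ℝ (Set.range (v i))) :
    sminFam (fun q : Σ i, κ i => u q.1 q.2) = sminFam (fun q : Σ i, κ i => v q.1 q.2) := by
  rw [sminFam, sminFam, setOf_norm_sum_sigma_eq hu, setOf_norm_sum_sigma_eq hv]
  simp only [hspan]

end Orthonormal

theorem condition_number_scale_invariant_general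
    (N r : ℕ) (n : Fin r → ℕ)
    (M : Fin r → Set (EuclideanSpace ℝ (Fin N)))
    (hcone : ∀ i, ∀ p ∈ M i, ∀ α : ℝ, α ≠ 0 → α • p ∈ M i)
    (p : (i : Fin r) → EuclideanSpace ℝ (Fin N))
    (β : Fin r → ℝ) (hβ : ∀ i, β i ≠ 0)
    (u v : (i : Fin r) → Fin (n i) → EuclideanSpace ℝ (Fin N))
    (huo : ∀ i, Orthonormal ℝ (u i)) (hvo : ∀ i, Orthonormal ℝ (v i))
    (huspan : ∀ i, Submodule.span ℝ (Set.range (u i)) = tangentSpaceAt (M i) (p i))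
    (hvspan : ∀ i, Submodule.span ℝ (Set.range (v i)) = tangentSpaceAt (M i) (β i • p i)) :
    sminFam (fun q : (i : Fin r) × Fin (n i) => u q.1 q.2) =
      sminFam (fun q : (i : Fin r) × Fin (n i) => v q.1 q.2) ∧
    (sminFam (fun q : (i : Fin r) × Fin (n i) => u q.1 q.2))⁻¹ =
      (sminFam (fun q : (i : Fin r) × Fin (n i) => v q.1 q.2))⁻¹ := by
  have hsmin := sminFam_sigma_eq_of_span_eq huo hvo fun i => by
    rw [huspan, hvspan, tangentSpaceAt, tangentSpaceAt,
      span_tangentConeAt_smul (hcone i) (hβ i)]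
  exact ⟨hsmin, congrArg _ hsmin⟩

/-- Scale invariance of the condition number of the join decomposition problem for cones:
if every `Mᵢ` is a cone, then for any nonzero scalings `βᵢ`, any orthonormal bases `u i` of the
tangent spaces at `pᵢ` and `v i` of the tangent spaces at `βᵢ • pᵢ` give block matrices with the
same smallest singular value, and hence `κ((p₁,…,p_r)) = κ((β₁ p₁, …, β_r p_r))`. -/
theorem condition_number_scale_invariant
    (N r : ℕ) (n : Fin r → ℕ)
    (M : Fin r → Set (EuclideanSpace ℝ (Fin N)))
    (hcone : ∀ i, ∀ p ∈ M i, ∀ α : ℝ, α ≠ 0 → α • p ∈ M i)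
    (p : (i : Fin r) → EuclideanSpace ℝ (Fin N)) (hp : ∀ i, p i ∈ M i)
    (β : Fin r → ℝ) (hβ : ∀ i, β i ≠ 0)
    (hdim : ∀ i, Module.finrank ℝ (tangentSpaceAt (M i) (p i)) = n i)
    (u v : (i : Fin r) → Fin (n i) → EuclideanSpace ℝ (Fin N))
    (huo : ∀ i, Orthonormal ℝ (u i)) (hvo : ∀ i, Orthonormal ℝ (v i))
    (huspan : ∀ i, Submodule.span ℝ (Set.range (u i)) = tangentSpaceAt (M i) (p i))
    (hvspan : ∀ i, Submodule.span ℝ (Set.range (v i)) = tangentSpaceAt (M i) (β i • p i)) :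
    sminFam (fun q : (i : Fin r) × Fin (n i) => u q.1 q.2) =
      sminFam (fun q : (i : Fin r) × Fin (n i) => v q.1 q.2) ∧
    (sminFam (fun q : (i : Fin r) × Fin (n i) => u q.1 q.2))⁻¹ =
      (sminFam (fun q : (i : Fin r) × Fin (n i) => v q.1 q.2))⁻¹ :=
  condition_number_scale_invariant_general N r n M hcone p β hβ u v huo hvo huspan hvspan
end

section
/- Let $d \ge 3$ and for $i = 1, \ldots, r$ let $a_i^{(k)} \in \mathbb{R}^{m_k}$, $k = 1, \ldots, d$, be unit vectors such that for every pair $i \ne j$ there exist three indices $k_1 < k_2 < k_3$ with $a_i^{(k_l)} \perp a_j^{(k_l)}$ for $l = 1,2,3$ (weak 3-orthogonality). For each $i$ let $U_i$ be the matrix with columns: $a_i^{(1)} \otimes \cdots \otimes a_i^{(d)}$, followed by the columns of $Q_i^1 \otimes a_i^{(2)} \otimes \cdots \otimes a_i^{(d)}$, ..., $a_i^{(1)} \otimes \cdots \otimes a_i^{(d-1)} \otimes Q_i^d$, where $Q_i^k$ is a matrix whose columns form an orthonormal basis of the orthogonal complement of $a_i^{(k)}$ in $\mathbb{R}^{m_k}$.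 Then $U = [U_1 \cdots U_r]$ has orthonormal columns: $U^T U = I$. -/
open scoped BigOperators

lemma pick3 {α : Type*} (k₁ k₂ k₃ x y : α) (h12 : k₁ ≠ k₂) (h13 : k₁ ≠ k₃) (h23 : k₂ ≠ k₃) :
    ∃ k, (k = k₁ ∨ k = k₂ ∨ k = k₃) ∧ k ≠ x ∧ k ≠ y := by
  classical
  by_cases a1 : k₁ ≠ x ∧ k₁ ≠ y
  · exact ⟨k₁, Or.inl rfl, a1.1, a1.2⟩
  by_cases a2 : k₂ ≠ x ∧ k₂ ≠ y
  · exact ⟨k₂, Or.inr (Or.inl rfl), a2.1, a2.2⟩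
  refine ⟨k₃, Or.inr (Or.inr rfl), ?_, ?_⟩ <;>
  · rw [not_and_or, not_not, not_not] at a1 a2
    rintro rfl
    rcases a1 with rfl | rfl <;> rcases a2 with rfl | rfl <;> simp_all

lemma sum_prod_mul_prod {d : ℕ} (m : Fin d → ℕ) (A B : (k : Fin d) → Fin (m k) → ℝ) :
    ∑ J : (k : Fin d) → Fin (m k), (∏ k, A k (J k)) * (∏ k, B k (J k)) =
      ∏ k, ∑ j, A k j * B k j := by
  rw [Finset.prod_univ_sum]
  simp [Fintype.piFinset_univ, ← Finset.prod_mul_distrib]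

/-- For a weak 3-orthogonal CP decomposition, the matrix `U = [U₁ ⋯ U_r]` of orthonormal
tangent bases at the rank-one tensors `aᵢ⁽¹⁾ ⊗ ⋯ ⊗ aᵢ⁽ᵈ⁾` has orthonormal columns.
A tensor in `ℝ^{m₁} ⊗ ⋯ ⊗ ℝ^{m_d}` is represented as a function `((k : Fin d) → Fin (m k)) → ℝ`. -/
theorem weak3_orthogonal_cpd_tangent_basis_orthonormal
    (d r : ℕ) (hd : 3 ≤ d) (m : Fin d → ℕ)
    (a : Fin r → (k : Fin d) → Fin (m k) → ℝ)
    (haunit : ∀ i k, ∑ j, (a i k j) ^ 2 = 1)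
    (hweak3 : ∀ i i' : Fin r, i ≠ i' → ∃ k₁ k₂ k₃ : Fin d, k₁ < k₂ ∧ k₂ < k₃ ∧
      (∑ j, a i k₁ j * a i' k₁ j = 0) ∧ (∑ j, a i k₂ j * a i' k₂ j = 0) ∧
      (∑ j, a i k₃ j * a i' k₃ j = 0))
    (Q : Fin r → (k : Fin d) → Fin (m k - 1) → Fin (m k) → ℝ)
    (hQ : ∀ i k, ∀ l l' : Fin (m k - 1),
      ∑ j, Q i k l j * Q i k l' j = if l = l' then 1 else 0)
    (hQa : ∀ i k, ∀ l : Fin (m k - 1), ∑ j, Q i k l j * a i k j = 0)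
    (c : Fin r → (Unit ⊕ ((k : Fin d) × Fin (m k - 1))) → (((k : Fin d) → Fin (m k)) → ℝ))
    (hc0 : ∀ i, c i (Sum.inl ()) = fun J => ∏ k : Fin d, a i k (J k))
    (hc1 : ∀ i (k₀ : Fin d) (l : Fin (m k₀ - 1)), c i (Sum.inr ⟨k₀, l⟩) = fun J =>
      ∏ k : Fin d, (if k = k₀ then Q i k₀ l (J k₀) else a i k (J k))) :
    ∀ (i i' : Fin r) (s s' : Unit ⊕ ((k : Fin d) × Fin (m k - 1))),
      ∑ J : (k : Fin d) → Fin (m k), c i s J * c i' s' J =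
        if i = i' ∧ s = s' then 1 else 0 := by
  classical
  -- the family of "column factors"
  set A : (Unit ⊕ ((k : Fin d) × Fin (m k - 1))) → Fin r → (k : Fin d) → Fin (m k) → ℝ :=
    fun s i k j =>
      match s with
      | Sum.inl _ => a i k j
      | Sum.inr ⟨k₀, l⟩ =>
          if h : k = k₀ then Q i k₀ l (Fin.cast (congrArg m h) j) else a i k j
    with hAdef
  have hAinl : ∀ i k j, A (Sum.inl ()) i k j = a i k j := fun i k j => rfl
  have hAinr_eq : ∀ i k₀ l j, A (Sum.inr ⟨k₀, l⟩) i k₀ j = Q i k₀ l j := by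
    intro i k₀ l j
    simp [hAdef]
  have hAinr_ne : ∀ i k₀ l k j, k ≠ k₀ → A (Sum.inr ⟨k₀, l⟩) i k j = a i k j := by
    intro i k₀ l k j hk
    simp [hAdef, hk]
  have hA : ∀ s i (J : (k : Fin d) → Fin (m k)), c i s J = ∏ k, A s i k (J k) := by
    rintro (⟨⟩ | ⟨k₀, l⟩) i J
    · rw [hc0]
    · rw [hc1]
      refine Finset.prod_congr rfl fun k _ => ?_
      by_cases h : k = k₀
      · subst h; simp [hAdef]
      · simp [hAdef, h]
  have haa : ∀ i k, ∑ j, a i k j * a i k j = 1 := by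
    intro i k; simpa [sq] using haunit i k
  intro i i' s s'
  have key : ∑ J : (k : Fin d) → Fin (m k), c i s J * c i' s' J =
      ∏ k, ∑ j, A s i k j * A s' i' k j := by
    simp_rw [hA]
    exact sum_prod_mul_prod m _ _
  by_cases hii : i = i'
  · subst hii
    rcases s with ⟨⟩ | ⟨k₀, l⟩ <;> rcases s' with ⟨⟩ | ⟨k₀', l'⟩
    · simp only [and_self, if_pos, true_and, if_true]
      rw [key]
      refine Finset.prod_eq_one fun k _ => ?_
      simp only [hAinl]
      exact haa i k
    · rw [if_neg (by simp), key]
      refine Finset.prod_eq_zero (Finset.mem_univ k₀') ?_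
      simp only [hAinl, hAinr_eq]
      simpa [mul_comm] using hQa i k₀' l'
    · rw [if_neg (by simp), key]
      refine Finset.prod_eq_zero (Finset.mem_univ k₀) ?_
      simp only [hAinl, hAinr_eq]
      exact hQa i k₀ l
    · by_cases hkk : k₀ = k₀'
      · subst hkk
        rw [key]
        rw [Finset.prod_eq_single_of_mem k₀ (Finset.mem_univ _)
          (fun k _ hk => by simp only [hAinr_ne i k₀ _ k _ hk]; exact haa i k)]
        simp only [hAinr_eq]
        rw [hQ i k₀ l l']
        simp
      · rw [if_neg (by simp [hkk]), key]
        refine Finset.prod_eq_zero (Finset.mem_univ k₀) ?_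
        have : (∑ j, A (Sum.inr ⟨k₀, l⟩) i k₀ j * A (Sum.inr ⟨k₀', l'⟩) i k₀ j)
            = ∑ j, Q i k₀ l j * a i k₀ j := by
          refine Finset.sum_congr rfl fun j _ => ?_
          rw [hAinr_eq, hAinr_ne i k₀' l' k₀ j hkk]
        rw [this]
        exact hQa i k₀ l
  · rw [if_neg (by simp [hii]), key]
    obtain ⟨k₁, k₂, k₃, h12, h23, o1, o2, o3⟩ := hweak3 i i' hii
    obtain ⟨x, hx⟩ : ∃ x : Fin d, ∀ k, k ≠ x → ∀ j, A s i k j = a i k j := by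
      rcases s with ⟨⟩ | ⟨k₀, l⟩
      · exact ⟨⟨0, by omega⟩, fun k _ j => rfl⟩
      · exact ⟨k₀, fun k hk j => hAinr_ne i k₀ l k j hk⟩
    obtain ⟨y, hy⟩ : ∃ y : Fin d, ∀ k, k ≠ y → ∀ j, A s' i' k j = a i' k j := by
      rcases s' with ⟨⟩ | ⟨k₀, l⟩
      · exact ⟨⟨0, by omega⟩, fun k _ j => rfl⟩
      · exact ⟨k₀, fun k hk j => hAinr_ne i' k₀ l k j hk⟩
    obtain ⟨k, hk123, hkx, hky⟩ :=
      pick3 k₁ k₂ k₃ x y h12.ne (h12.trans h23).ne h23.ne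
    refine Finset.prod_eq_zero (Finset.mem_univ k) ?_
    have : ∑ j, A s i k j * A s' i' k j = ∑ j, a i k j * a i' k j := by
      refine Finset.sum_congr rfl fun j _ => ?_
      rw [hx k hkx j, hy k hky j]
    rw [this]
    rcases hk123 with rfl | rfl | rfl
    · exact o1
    · exact o2
    · exact o3
end

section
/- Let $V$ be a subspace of $\mathbb{R}^N$ of dimension $m \ge 1$ and let $x \in \mathbb{R}^N$ be a unit vector. Then $\inf \{ \|\Pi_V - \Pi_{V'}\| : V' \subseteq \mathbb{R}^N, \dim V' = m, x \in V' \} = \min_{w \in V, \|w\|=1} \sqrt{1 - \langle x, w \rangle^2}$, i.e., the projection distance from $V$ to the set of $m$-dimensional subspaces containing $x$ equals the sine of the principal angle between $x$ and $V$. -/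
/-!
Write `P` for the orthogonal projection onto `V`. Both infima are attained at `‖x - P x‖`.
On the right, `⟪x, w⟫ = ⟪P x, w⟫ ≤ ‖P x‖` for unit `w ∈ V`, with equality in the direction of
`P x`. On the left, any `V'` containing `x` has `(P - P_{V'}) x = P x - x`. Conversely, if `w` is
the unit vector in the direction of `P x` and `W = w^⊥ ∩ V`, then `x ⟂ W`, and rotating `w` to `x`
gives `V' = span x ⊕ W` with `P - P_{V'} = P_w - P_x`. For any `v`, the nonnegativity of the Gram
determinant of `w, x, v` says exactly that `‖(P_w - P_x) v‖ ≤ √(1 - ⟪x, w⟫²) ‖v‖`.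
-/

open scoped BigOperators RealInnerProductSpace

noncomputable section

/-- Orthogonal projection onto a subspace of Euclidean space, as a continuous linear map. -/
def projCLM {N : ℕ} (V : Submodule ℝ (EuclideanSpace ℝ (Fin N))) :
    EuclideanSpace ℝ (Fin N) →L[ℝ] EuclideanSpace ℝ (Fin N) :=
  V.subtypeL.comp (V.orthogonalProjection)

namespace Submodule

variable {𝕜 E : Type*} [RCLike 𝕜] [NormedAddCommGroup E] [InnerProductSpace 𝕜 E]

theorem inner_starProjection_of_mem (K : Submodule 𝕜 E) [K.HasOrthogonalProjection] (x : E)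
    {w : E} (hw : w ∈ K) : inner 𝕜 (K.starProjection x) w = inner 𝕜 x w := by
  rw [inner_starProjection_left_eq_right, starProjection_eq_self_iff.mpr hw]

theorem norm_sub_starProjection_le_of_mem (V : Submodule 𝕜 E) {V' : Submodule 𝕜 E}
    [V.HasOrthogonalProjection] [V'.HasOrthogonalProjection] {x : E} (hx : x ∈ V') :
    ‖x - V.starProjection x‖ ≤ ‖V.starProjection - V'.starProjection‖ * ‖x‖ := by
  calc ‖x - V.starProjection x‖ = ‖(V.starProjection - V'.starProjection) x‖ := by
        rw [sub_apply, starProjection_eq_self_iff.mpr hx, norm_sub_rev]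
    _ ≤ _ := ContinuousLinearMap.le_opNorm _ x

theorem starProjection_sup_of_isOrtho {K L : Submodule 𝕜 E} [K.HasOrthogonalProjection]
    [L.HasOrthogonalProjection] [(K ⊔ L).HasOrthogonalProjection] (h : K ⟂ L) :
    (K ⊔ L).starProjection = K.starProjection + L.starProjection := by
  ext v
  refine eq_starProjection_of_mem_orthogonal
    (add_mem (mem_sup_left (K.starProjection_apply_mem v))
      (mem_sup_right (L.starProjection_apply_mem v))) ?_
  rw [add_apply, ← inf_orthogonal]
  constructor
  · rw [← sub_sub]
    exact sub_mem (K.sub_starProjection_mem_orthogonal v)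
      (isOrtho_iff_le.mp h.symm (L.starProjection_apply_mem v))
  · rw [sub_add_eq_sub_sub_swap]
    exact sub_mem (L.sub_starProjection_mem_orthogonal v)
      (isOrtho_iff_le.mp h (K.starProjection_apply_mem v))

theorem finrank_span_singleton_sup_of_isOrtho {x : E} (hx : x ≠ 0) {W : Submodule 𝕜 E}
    [FiniteDimensional 𝕜 W] (h : (𝕜 ∙ x) ⟂ W) :
    Module.finrank 𝕜 ↥((𝕜 ∙ x) ⊔ W) = Module.finrank 𝕜 W + 1 := by
  have hsum := finrank_sup_add_finrank_inf_eq (𝕜 ∙ x) W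
  rw [h.disjoint.eq_bot, finrank_bot, finrank_span_singleton hx] at hsum
  omega

theorem exists_norm_eq_one_smul_eq {V : Submodule 𝕜 E} (hV : V ≠ ⊥) {y : E} (hy : y ∈ V) :
    ∃ w ∈ V, ‖w‖ = 1 ∧ y = (‖y‖ : 𝕜) • w := by
  by_cases hy0 : y = 0
  · obtain ⟨z, hzV, hz0⟩ := exists_mem_ne_zero_of_ne_bot hV
    exact ⟨(‖z‖⁻¹ : 𝕜) • z, V.smul_mem _ hzV, norm_smul_inv_norm hz0, by simp [hy0]⟩
  · refine ⟨(‖y‖⁻¹ : 𝕜) • y, V.smul_mem _ hy, norm_smul_inv_norm hy0, ?_⟩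
    rw [smul_smul, ← RCLike.ofReal_inv, ← RCLike.ofReal_mul,
      mul_inv_cancel₀ (norm_ne_zero_iff.mpr hy0), RCLike.ofReal_one, one_smul]

end Submodule

open Submodule

variable {E : Type*} [NormedAddCommGroup E] [InnerProductSpace ℝ E]

theorem det_gram_three_nonneg (u v z : E) :
    0 ≤ ‖u‖ ^ 2 * ‖v‖ ^ 2 * ‖z‖ ^ 2 + 2 * ⟪u, v⟫ * ⟪v, z⟫ * ⟪u, z⟫
      - ‖u‖ ^ 2 * ⟪v, z⟫ ^ 2 - ‖v‖ ^ 2 * ⟪u, z⟫ ^ 2 - ‖z‖ ^ 2 * ⟪u, v⟫ ^ 2 := by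
  have h := (Matrix.posSemidef_gram ℝ ![u, v, z]).det_nonneg
  simp only [Matrix.det_fin_three, Matrix.gram_apply, Matrix.cons_val,
    real_inner_self_eq_norm_sq] at h
  rw [real_inner_comm u v, real_inner_comm u z, real_inner_comm v z] at h
  linarith

theorem norm_starProjection_span_sub_le {w x : E} (hw : ‖w‖ = 1) (hx : ‖x‖ = 1) :
    ‖(ℝ ∙ w).starProjection - (ℝ ∙ x).starProjection‖ ≤ √(1 - ⟪x, w⟫ ^ 2) := by
  refine ContinuousLinearMap.opNorm_le_bound _ (Real.sqrt_nonneg _) fun v => ?_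
  rw [sub_apply, starProjection_unit_singleton ℝ hw,
    starProjection_unit_singleton ℝ hx, ← Real.sqrt_sq (norm_nonneg v),
    ← Real.sqrt_mul' _ (sq_nonneg _)]
  refine Real.le_sqrt_of_sq_le ?_
  have hgram := det_gram_three_nonneg w x v
  rw [hw, hx] at hgram
  have hww : ⟪w, w⟫ = 1 := by rw [real_inner_self_eq_norm_sq, hw, one_pow]
  have hxx : ⟪x, x⟫ = 1 := by rw [real_inner_self_eq_norm_sq, hx, one_pow]
  calc ‖⟪w, v⟫ • w - ⟪x, v⟫ • x‖ ^ 2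
      = ⟪w, v⟫ ^ 2 - 2 * ⟪w, v⟫ * ⟪x, v⟫ * ⟪w, x⟫ + ⟪x, v⟫ ^ 2 := by
        rw [← real_inner_self_eq_norm_sq]
        simp only [inner_sub_left, inner_sub_right, real_inner_smul_left, real_inner_smul_right,
          hww, hxx, real_inner_comm w x]
        ring
    _ ≤ (1 - ⟪x, w⟫ ^ 2) * ‖v‖ ^ 2 := by
        rw [real_inner_comm w x]
        linarith

theorem norm_sub_starProjection_sq (K : Submodule ℝ E) [K.HasOrthogonalProjection] (x : E) :
    ‖x - K.starProjection x‖ ^ 2 = ‖x‖ ^ 2 - ‖K.starProjection x‖ ^ 2 := by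
  rw [K.norm_sq_eq_add_norm_sq_starProjection x, starProjection_orthogonal_val]
  ring

theorem sqrt_one_sub_inner_sq_eq_norm_sub_starProjection {V : Submodule ℝ E}
    [V.HasOrthogonalProjection] {x w : E} (hx : ‖x‖ = 1) (hwV : w ∈ V) (hw : ‖w‖ = 1)
    (hxw : V.starProjection x = ‖V.starProjection x‖ • w) :
    √(1 - ⟪x, w⟫ ^ 2) = ‖x - V.starProjection x‖ := by
  have hinner : ⟪x, w⟫ = ‖V.starProjection x‖ :=
    calc ⟪x, w⟫ = ⟪‖V.starProjection x‖ • w, w⟫ := by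
          rw [← hxw, V.inner_starProjection_of_mem x hwV]
      _ = ‖V.starProjection x‖ := by
          rw [real_inner_smul_left, real_inner_self_eq_norm_sq, hw, one_pow, mul_one]
  rw [hinner, ← Real.sqrt_sq (norm_nonneg (x - _)), norm_sub_starProjection_sq, hx, one_pow]

theorem isLeast_sqrt_one_sub_inner_sq {V : Submodule ℝ E} [V.HasOrthogonalProjection]
    (hV : V ≠ ⊥) {x : E} (hx : ‖x‖ = 1) :
    IsLeast {s | ∃ w ∈ V, ‖w‖ = 1 ∧ s = √(1 - ⟪x, w⟫ ^ 2)} ‖x - V.starProjection x‖ := by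
  refine ⟨?_, ?_⟩
  · obtain ⟨w, hwV, hw, hxw⟩ := exists_norm_eq_one_smul_eq hV (V.starProjection_apply_mem x)
    exact ⟨w, hwV, hw, (sqrt_one_sub_inner_sq_eq_norm_sub_starProjection hx hwV hw hxw).symm⟩
  · rintro s ⟨w, hwV, hw, rfl⟩
    have hcs := abs_real_inner_le_norm (V.starProjection x) w
    rw [hw, mul_one, V.inner_starProjection_of_mem x hwV] at hcs
    rw [← Real.sqrt_sq (norm_nonneg _), norm_sub_starProjection_sq, hx]
    exact Real.sqrt_le_sqrt (by linarith [sq_le_sq' (abs_le.mp hcs).1 (abs_le.mp hcs).2])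

theorem norm_starProjection_sup_sub_sup_le {w x : E} (hw : ‖w‖ = 1) (hx : ‖x‖ = 1)
    {W : Submodule ℝ E} [W.HasOrthogonalProjection] [((ℝ ∙ w) ⊔ W).HasOrthogonalProjection]
    [((ℝ ∙ x) ⊔ W).HasOrthogonalProjection] (hwW : (ℝ ∙ w) ⟂ W) (hxW : (ℝ ∙ x) ⟂ W) :
    ‖((ℝ ∙ w) ⊔ W).starProjection - ((ℝ ∙ x) ⊔ W).starProjection‖ ≤ √(1 - ⟪x, w⟫ ^ 2) := by
  rw [starProjection_sup_of_isOrtho hwW, starProjection_sup_of_isOrtho hxW,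
    add_sub_add_right_eq_sub]
  exact norm_starProjection_span_sub_le hw hx

variable [FiniteDimensional ℝ E]

theorem exists_finrank_eq_mem_norm_starProjection_sub_le {V : Submodule ℝ E} {w x : E}
    (hwV : w ∈ V) (hw : ‖w‖ = 1) (hx : ‖x‖ = 1) (hxW : (ℝ ∙ x) ⟂ (ℝ ∙ w)ᗮ ⊓ V) :
    ∃ V' : Submodule ℝ E, Module.finrank ℝ V' = Module.finrank ℝ V ∧ x ∈ V' ∧
      ‖V.starProjection - V'.starProjection‖ ≤ √(1 - ⟪x, w⟫ ^ 2) := by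
  set W := (ℝ ∙ w)ᗮ ⊓ V
  have hwW : (ℝ ∙ w) ⟂ W := (isOrtho_iff_le.mpr inf_le_left).symm
  have hV : (ℝ ∙ w) ⊔ W = V :=
    sup_orthogonal_inf_of_hasOrthogonalProjection ((span_singleton_le_iff_mem _ _).mpr hwV)
  refine ⟨(ℝ ∙ x) ⊔ W, ?_, mem_sup_left (mem_span_singleton_self x), ?_⟩
  · rw [← hV, finrank_span_singleton_sup_of_isOrtho (norm_ne_zero_iff.mp (by simp [hx])) hxW,
      finrank_span_singleton_sup_of_isOrtho (norm_ne_zero_iff.mp (by simp [hw])) hwW]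
  · have hPV : V.starProjection = ((ℝ ∙ w) ⊔ W).starProjection := by
      congr 1
      exact hV.symm
    rw [hPV]
    exact norm_starProjection_sup_sub_sup_le hw hx hwW hxW

theorem isLeast_norm_starProjection_sub {V : Submodule ℝ E} (hV : V ≠ ⊥) {x : E} (hx : ‖x‖ = 1) :
    IsLeast {d | ∃ V' : Submodule ℝ E, Module.finrank ℝ V' = Module.finrank ℝ V ∧ x ∈ V' ∧
      d = ‖V.starProjection - V'.starProjection‖} ‖x - V.starProjection x‖ := by
  have hlb : ∀ V' : Submodule ℝ E, x ∈ V' →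
      ‖x - V.starProjection x‖ ≤ ‖V.starProjection - V'.starProjection‖ := fun V' hxV' => by
    simpa [hx] using V.norm_sub_starProjection_le_of_mem hxV'
  refine ⟨?_, fun d ⟨V', _, hxV', hd⟩ => hd ▸ hlb V' hxV'⟩
  obtain ⟨w, hwV, hw, hxw⟩ := exists_norm_eq_one_smul_eq hV (V.starProjection_apply_mem x)
  have hxW : (ℝ ∙ x) ⟂ (ℝ ∙ w)ᗮ ⊓ V := by
    refine isOrtho_iff_le.mpr ((span_singleton_le_iff_mem _ _).mpr ?_)
    refine (mem_orthogonal' _ _).mpr fun z hz => ?_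
    rw [← V.inner_starProjection_of_mem x hz.2, hxw, real_inner_smul_left,
      mem_orthogonal_singleton_iff_inner_right.mp hz.1, mul_zero]
  obtain ⟨V', hV', hxV', hle⟩ := exists_finrank_eq_mem_norm_starProjection_sub_le hwV hw hx hxW
  rw [sqrt_one_sub_inner_sq_eq_norm_sub_starProjection hx hwV hw hxw] at hle
  exact ⟨V', hV', hxV', le_antisymm (hlb V' hxV') hle⟩

/-- The projection distance from an `m`-dimensional subspace `V` to the set of
`m`-dimensional subspaces containing a given unit vector `x` equals
`min_{w ∈ V, ‖w‖=1} √(1 - ⟪x, w⟫²)`, the sine of the principal angle between `x` and `V`. -/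
theorem dist_to_subspaces_containing_vector
    (N m : ℕ) (hm : 1 ≤ m)
    (V : Submodule ℝ (EuclideanSpace ℝ (Fin N)))
    (hV : Module.finrank ℝ V = m)
    (x : EuclideanSpace ℝ (Fin N)) (hx : ‖x‖ = 1) :
    sInf {d : ℝ | ∃ V' : Submodule ℝ (EuclideanSpace ℝ (Fin N)),
        Module.finrank ℝ V' = m ∧ x ∈ V' ∧ d = ‖projCLM V - projCLM V'‖} =
      sInf {s : ℝ | ∃ w ∈ V, ‖w‖ = 1 ∧ s = Real.sqrt (1 - ⟪x, w⟫ ^ 2)} := by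
  subst hV
  have hV0 : V ≠ ⊥ := one_le_finrank_iff.mp hm
  exact (isLeast_norm_starProjection_sub hV0 hx).csInf_eq.trans
    (isLeast_sqrt_one_sub_inner_sq hV0 hx).csInf_eq.symm

end
end
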